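/- In the binary JSCCSJ game, the pair (uncoded user strategy f(S)=S, g(Y)=Y; i.i.d. jamming J ~ Bern(P_J) independent of X) is a Nash equilibrium for n = 1, with equilibrium expected distortion p(1−P_J)+(1−p)P_J. That is: (i) given the user strategy, no jamming distribution q on {0,1}² with E[J] ≤ P_J achieves larger expected distortion; (ii) given the jamming strategy, no (possibly randomized) encoder f : {0,1} → {0,1} and decoder g : {0,1} → {0,1} achieves smaller expected distortion. -/
import Mathlib


open Finset

/-- A probability kernel from `Bool` to `Bool`. -/
def IsBKernel (q : Bool → Bool → ℝ) : Prop :=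
  (∀ x j, 0 ≤ q x j) ∧ ∀ x, q x true + q x false = 1

/-- Hamming distortion on bits. -/
noncomputable def dH (s sh : Bool) : ℝ := if s = sh then 0 else 1

/-- Expected Hamming distortion `E[d_H(S, Ŝ)]` for `S ~ Bern(1/2)`, randomized
encoder kernel `e`, jamming kernel `q` (given `X`), independent noise `Z ~ Bern(p)`,
channel `Y = X ⊕ J ⊕ Z` and randomized decoder kernel `dec`. -/
noncomputable def gameDist (p : ℝ) (e : Bool → Bool → ℝ) (dec : Bool → Bool → ℝ)
    (q : Bool → Bool → ℝ) : ℝ :=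
  ∑ s : Bool, ∑ x : Bool, ∑ j : Bool, ∑ z : Bool, ∑ sh : Bool,
    (1 / 2) * e s x * q x j * (if z then p else 1 - p) *
      dec (xor x (xor j z)) sh * dH s sh

/-- Expected jammer cost `E[J]` for encoder kernel `e` and jamming kernel `q`. -/
noncomputable def gameJCost (e : Bool → Bool → ℝ) (q : Bool → Bool → ℝ) : ℝ :=
  ∑ s : Bool, ∑ x : Bool, (1 / 2) * e s x * q x true

/-- The deterministic identity kernel on bits (uncoded encoder/decoder). -/
noncomputable def idKer : Bool → Bool → ℝ := fun x y => if y = x then 1 else 0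

/-- in the binary JSCCSJ game with `n = 1`, the uncoded user strategy
`f(S)=S, g(Y)=Y` together with i.i.d. jamming `J ~ Bern(P_J)` independent of `X` is a
Nash equilibrium, with equilibrium expected distortion `p(1−P_J) + (1−p)P_J`:
(i) no feasible jammer deviation increases the distortion, and (ii) no (possibly
randomized) encoder/decoder deviation decreases it. -/
theorem binary_nash (p PJ : ℝ) (hp0 : 0 ≤ p) (hp : p ≤ 1 / 2)
    (hPJ0 : 0 ≤ PJ) (hPJ : PJ ≤ 1 / 2) :
    gameDist p idKer idKer (fun _ j => if j then PJ else 1 - PJ) =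
        p * (1 - PJ) + (1 - p) * PJ ∧
      (∀ q : Bool → Bool → ℝ, IsBKernel q → gameJCost idKer q ≤ PJ →
        gameDist p idKer idKer q ≤ p * (1 - PJ) + (1 - p) * PJ) ∧
      (∀ e dec : Bool → Bool → ℝ, IsBKernel e → IsBKernel dec →
        p * (1 - PJ) + (1 - p) * PJ ≤
          gameDist p e dec (fun _ j => if j then PJ else 1 - PJ)) := by
  refine ⟨?_, ?_, ?_⟩
  · simp [gameDist, idKer, dH, Fintype.sum_bool]
    ring
  · rintro q ⟨hq0, hq1⟩ hcost
    have h1 := hq1 true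
    have h2 := hq1 false
    have ht := hq0 true true
    have hf := hq0 false true
    simp [gameJCost, idKer, Fintype.sum_bool] at hcost
    simp [gameDist, idKer, dH, Fintype.sum_bool]
    nlinarith [mul_nonneg (hq0 true true) hp0, mul_nonneg (hq0 false true) hp0,
      mul_nonneg ht (by linarith : (0:ℝ) ≤ 1 - 2*p),
      mul_nonneg hf (by linarith : (0:ℝ) ≤ 1 - 2*p)]
  · rintro e dec ⟨he0, he1⟩ ⟨hd0, hd1⟩
    have hea := he1 false
    have heb := he1 true
    have hdu := hd1 false
    have hdv := hd1 true
    set a := e false true with ha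
    set b := e true true with hb
    set u := dec false true with hu
    set v := dec true true with hv
    have haf : e false false = 1 - a := by linarith
    have hbf : e true false = 1 - b := by linarith
    have huf : dec false false = 1 - u := by linarith
    have hvf : dec true false = 1 - v := by linarith
    have ha0 := he0 false true
    have ha1 : a ≤ 1 := by have := he0 false false; linarith
    have hb0 := he0 true true
    have hb1 : b ≤ 1 := by have := he0 true false; linarith
    have hu0 := hd0 false true
    have hu1 : u ≤ 1 := by have := hd0 false false; linarith
    have hv0 := hd0 true true
    have hv1 : v ≤ 1 := by have := hd0 true false; linarith
    have hkey : 0 ≤ 1 + (b - a) * (u - v) := by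
      nlinarith [mul_nonneg (by linarith : (0:ℝ) ≤ 1 + (b - a)) (by linarith : (0:ℝ) ≤ 1 + (u - v)),
        mul_nonneg (by linarith : (0:ℝ) ≤ 1 - (b - a)) (by linarith : (0:ℝ) ≤ 1 - (u - v))]
    have heps : 0 ≤ 1 - 2 * (PJ * (1 - p) + (1 - PJ) * p) := by nlinarith
    simp [gameDist, dH, Fintype.sum_bool, haf, hbf, huf, hvf]
    nlinarith [mul_nonneg heps hkey]
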